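/- Let m > 0, κ := 1/(4m), and consider the Schwarzschild metric in regular coordinates (t*, r, θ, φ): the matrix g*(t*,r,θ,φ) with nonzero entries g*₀₀ = −(1−2m/r), g*₀₁ = g*₁₀ = 2m/r, g*₁₁ = 1+2m/r, g*₂₂ = r², g*₃₃ = r² sin²θ, defined on U := {r > 0, 0 < θ < π}. Fix θ₀ ∈ (0,π) and φ₀ ∈ ℝ. Then the curve γ : (0,∞) → U, γ(s) := ((1/κ)·log s, 2m, θ₀, φ₀), is an affinely parametrized null geodesic of g* (a generator of the event horizon), and, with the vector field N^μ(x) := −(g*(x)⁻¹)^{μ0}, its energy satisfies −Σ_{μ,ν} g*_{μν}(γ(s)) N^μ(γ(s)) γ̇^ν(s) = 1/(κ s) = (1/κ)·e^{−κ t*(γ(s))} for all s > 0; i.e., the energy of the horizon generators decays exponentially in t* (the red-shift effect). -/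

import Mathlib

/-!
Nothing depends on `t*` and `g*₀₀ = -(1 - 2m/r)` vanishes at `r = 2m`, so a curve moving only in
the `t*` direction at `r = 2m` is null, and its geodesic equation collapses to
`γ̈⁰ + Γ⁰₀₀ (γ̇⁰)² = 0`. Stationarity gives `Γ^μ₀₀ = -½ (g⁻¹)^{μν} ∂_ν g₀₀ = (m/r²) (g⁻¹)^{μ1}`,
which on the horizon is `κ δ^μ₀` with `κ = 1/(4m)`; `t* = (1/κ) log s` solves the resulting ODE.
The energy is `γ̇⁰ = 1/(κ s)`, since `g(-g⁻¹ dt*, ·) = -dt*` for any symmetric invertible `g`.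
-/

open Matrix

/-- The Christoffel symbols `Γ^μ_{αβ}` of a metric `g` on (an open subset of) `ℝ⁴`. -/
noncomputable def Christoffel (g : (Fin 4 → ℝ) → Matrix (Fin 4) (Fin 4) ℝ)
    (μ α β : Fin 4) (x : Fin 4 → ℝ) : ℝ :=
  (1 / 2) * ∑ ν : Fin 4, (g x)⁻¹ μ ν *
    (fderiv ℝ (fun y => g y ν β) x (Pi.single α 1)
      + fderiv ℝ (fun y => g y ν α) x (Pi.single β 1)
      - fderiv ℝ (fun y => g y α β) x (Pi.single ν 1))

/-- `γ` is an affinely parametrized geodesic of `g` at parameter `s`. -/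
noncomputable def IsGeodesicAt (g : (Fin 4 → ℝ) → Matrix (Fin 4) (Fin 4) ℝ)
    (γ : ℝ → Fin 4 → ℝ) (s : ℝ) : Prop :=
  ∀ μ : Fin 4,
    deriv (fun t => deriv (fun t' => γ t' μ) t) s
      + ∑ α : Fin 4, ∑ β : Fin 4,
          Christoffel g μ α β (γ s) * deriv (fun t => γ t α) s * deriv (fun t => γ t β) s = 0

/-- `γ` is null (with respect to `g`) at parameter `s`. -/
noncomputable def IsNullAt (g : (Fin 4 → ℝ) → Matrix (Fin 4) (Fin 4) ℝ)
    (γ : ℝ → Fin 4 → ℝ) (s : ℝ) : Prop :=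
  ∑ μ : Fin 4, ∑ ν : Fin 4,
    g (γ s) μ ν * deriv (fun t => γ t μ) s * deriv (fun t => γ t ν) s = 0

/-- The Schwarzschild metric in regular `(t*, r, θ, φ)` coordinates. -/
noncomputable def schwarzschildStar (m : ℝ) (x : Fin 4 → ℝ) : Matrix (Fin 4) (Fin 4) ℝ :=
  Matrix.of
    ![![-(1 - 2 * m / x 1), 2 * m / x 1, 0, 0],
      ![2 * m / x 1, 1 + 2 * m / x 1, 0, 0],
      ![0, 0, (x 1) ^ 2, 0],
      ![0, 0, 0, (x 1) ^ 2 * Real.sin (x 2) ^ 2]]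

open Real

theorem fderiv_comp_apply_pi_single {ι : Type*} [Fintype ι] [DecidableEq ι] {f : ℝ → ℝ}
    {p : ι → ℝ} {i : ι} (hf : DifferentiableAt ℝ f (p i)) (α : ι) :
    fderiv ℝ (fun y => f (y i)) p (Pi.single α 1) = deriv f (p i) * (Pi.single α 1 : ι → ℝ) i := by
  have h : HasFDerivAt (fun y : ι → ℝ => f (y i))
      (deriv f (p i) • ContinuousLinearMap.proj (R := ℝ) (φ := fun _ : ι => ℝ) i) p :=
    hf.hasDerivAt.comp_hasFDerivAt p (hasFDerivAt_apply i p)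
  simp [h.fderiv]

theorem Fintype.sum_sum_mul_pi_single_mul_pi_single {ι R : Type*} [Fintype ι] [DecidableEq ι]
    [CommSemiring R] (f : ι → ι → R) (i : ι) (v : R) :
    ∑ α, ∑ β, f α β * (Pi.single i v : ι → R) α * (Pi.single i v : ι → R) β = f i i * v ^ 2 := by
  simp [Pi.single_apply, sq, mul_assoc]

theorem Matrix.sum_sum_mul_inv_apply_mul {n R : Type*} [Fintype n] [DecidableEq n] [CommRing R]
    {g : Matrix n n R} (hg : g.IsSymm) (hdet : IsUnit g.det) (i : n) (v : n → R) :
    ∑ μ, ∑ ν, g μ ν * g⁻¹ μ i * v ν = v i := by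
  have hcol : ∀ ν, ∑ μ, g μ ν * g⁻¹ μ i = (1 : Matrix n n R) ν i := fun ν => by
    rw [← Matrix.mul_nonsing_inv g hdet, Matrix.mul_apply]
    simp only [hg.apply]
  rw [Finset.sum_comm]
  simp_rw [← Finset.sum_mul, hcol, Matrix.one_apply, ite_mul, one_mul, zero_mul,
    Finset.sum_ite_eq', Finset.mem_univ, if_true]

section CoordinateCurve

variable {g : (Fin 4 → ℝ) → Matrix (Fin 4) (Fin 4) ℝ} {γ : ℝ → Fin 4 → ℝ} {s v : ℝ}

theorem isNullAt_of_deriv_eq_pi_single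
    (hv : ∀ ν, deriv (fun t => γ t ν) s = (Pi.single 0 v : Fin 4 → ℝ) ν)
    (hg : g (γ s) 0 0 = 0) : IsNullAt g γ s := by
  simp only [IsNullAt, hv]
  rw [Fintype.sum_sum_mul_pi_single_mul_pi_single (g (γ s)), hg, zero_mul]

theorem isGeodesicAt_of_deriv_eq_pi_single {w k : ℝ}
    (hv : ∀ ν, deriv (fun t => γ t ν) s = (Pi.single 0 v : Fin 4 → ℝ) ν)
    (hw : ∀ μ, deriv (fun t => deriv (fun t' => γ t' μ) t) s = (Pi.single 0 w : Fin 4 → ℝ) μ)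
    (hΓ : ∀ μ, Christoffel g μ 0 0 (γ s) = (Pi.single 0 k : Fin 4 → ℝ) μ)
    (hwk : w + k * v ^ 2 = 0) :
    IsGeodesicAt g γ s := by
  intro μ
  simp only [hv, hw, Fintype.sum_sum_mul_pi_single_mul_pi_single, hΓ]
  fin_cases μ <;> simp [hwk]

end CoordinateCurve

theorem deriv_log_curve_apply (a b c d s : ℝ) (ν : Fin 4) :
    deriv (fun t => (![a * log t, b, c, d] : Fin 4 → ℝ) ν) s =
      (Pi.single 0 (a / s) : Fin 4 → ℝ) ν := by
  fin_cases ν <;> simp [deriv_const_mul_field', div_eq_mul_inv]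

theorem deriv_deriv_log_curve_apply (a b c d s : ℝ) (ν : Fin 4) :
    deriv (fun t => deriv (fun t' => (![a * log t', b, c, d] : Fin 4 → ℝ) ν) t) s =
      (Pi.single 0 (-(a / s ^ 2)) : Fin 4 → ℝ) ν := by
  fin_cases ν <;> simp [deriv_const_mul_field', div_eq_mul_inv]

theorem one_div_mul_eq_one_div_mul_exp {κ s : ℝ} (hκ : κ ≠ 0) (hs : 0 < s) :
    1 / (κ * s) = 1 / κ * exp (-κ * (1 / κ * log s)) := by
  rw [neg_mul, ← mul_assoc, mul_one_div_cancel hκ, one_mul, exp_neg, exp_log hs]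
  ring

noncomputable def schwarzschildStarInv (m : ℝ) (x : Fin 4 → ℝ) : Matrix (Fin 4) (Fin 4) ℝ :=
  Matrix.of
    ![![-(1 + 2 * m / x 1), 2 * m / x 1, 0, 0],
      ![2 * m / x 1, 1 - 2 * m / x 1, 0, 0],
      ![0, 0, (x 1 ^ 2)⁻¹, 0],
      ![0, 0, 0, (x 1 ^ 2 * sin (x 2) ^ 2)⁻¹]]

noncomputable def schwarzschildStarTimeCol (m : ℝ) : Fin 4 → ℝ → ℝ :=
  ![fun r => -(1 - 2 * m / r), fun r => 2 * m / r, fun _ => 0, fun _ => 0]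

section Schwarzschild

variable {m : ℝ} {x : Fin 4 → ℝ}

theorem schwarzschildStar_isSymm : (schwarzschildStar m x).IsSymm := by
  ext i j
  fin_cases i <;> fin_cases j <;> rfl

theorem schwarzschildStar_mul_schwarzschildStarInv (hr : x 1 ≠ 0) (hθ : sin (x 2) ≠ 0) :
    schwarzschildStar m x * schwarzschildStarInv m x = 1 := by
  ext i j
  fin_cases i <;> fin_cases j <;>
    simp [schwarzschildStar, schwarzschildStarInv, Matrix.mul_apply, Fin.sum_univ_four, hr] <;>
    field_simp <;> ring

theorem inv_schwarzschildStar (hr : x 1 ≠ 0) (hθ : sin (x 2) ≠ 0) :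
    (schwarzschildStar m x)⁻¹ = schwarzschildStarInv m x :=
  Matrix.inv_eq_right_inv (schwarzschildStar_mul_schwarzschildStarInv hr hθ)

theorem isUnit_det_schwarzschildStar (hr : x 1 ≠ 0) (hθ : sin (x 2) ≠ 0) :
    IsUnit (schwarzschildStar m x).det :=
  Matrix.isUnit_det_of_right_inverse (schwarzschildStar_mul_schwarzschildStarInv hr hθ)

theorem schwarzschildStar_apply_zero (m : ℝ) (y : Fin 4 → ℝ) (ν : Fin 4) :
    schwarzschildStar m y ν 0 = schwarzschildStarTimeCol m ν (y 1) := by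
  fin_cases ν <;> rfl

theorem differentiableAt_schwarzschildStarTimeCol (hr : x 1 ≠ 0) (ν : Fin 4) :
    DifferentiableAt ℝ (schwarzschildStarTimeCol m ν) (x 1) := by
  fin_cases ν <;> simp [schwarzschildStarTimeCol] <;> fun_prop (disch := exact hr)

theorem fderiv_schwarzschildStar_apply_zero (hr : x 1 ≠ 0) (ν α : Fin 4) :
    fderiv ℝ (fun y => schwarzschildStar m y ν 0) x (Pi.single α 1) =
      deriv (schwarzschildStarTimeCol m ν) (x 1) * (Pi.single α 1 : Fin 4 → ℝ) 1 := by
  simp_rw [schwarzschildStar_apply_zero]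
  exact fderiv_comp_apply_pi_single (differentiableAt_schwarzschildStarTimeCol hr ν) α

theorem christoffel_schwarzschildStar_zero_zero (hr : x 1 ≠ 0) (μ : Fin 4) :
    Christoffel (schwarzschildStar m) μ 0 0 x =
      m / x 1 ^ 2 * (schwarzschildStar m x)⁻¹ μ 1 := by
  have hg₀₀ : deriv (schwarzschildStarTimeCol m 0) (x 1) = -(2 * m / x 1 ^ 2) := by
    have := (((hasDerivAt_inv hr).const_mul (2 * m)).const_sub 1).neg
    simp only [schwarzschildStarTimeCol, Matrix.cons_val_zero, div_eq_mul_inv]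
    rw [show (fun r : ℝ => -(1 - 2 * m * r⁻¹)) = -fun r => 1 - 2 * m * r⁻¹ from rfl, this.deriv]
    ring
  simp only [Christoffel, fderiv_schwarzschildStar_apply_zero hr, hg₀₀]
  simp [Pi.single_apply]
  ring

theorem schwarzschildStar_zero_zero_of_horizon (hm : m ≠ 0) (hr : x 1 = 2 * m) :
    schwarzschildStar m x 0 0 = 0 := by
  simp [schwarzschildStar, hr, hm]

theorem christoffel_schwarzschildStar_zero_zero_of_horizon (hm : m ≠ 0) (hr : x 1 = 2 * m)
    (hθ : sin (x 2) ≠ 0) (μ : Fin 4) :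
    Christoffel (schwarzschildStar m) μ 0 0 x = (Pi.single 0 (1 / (4 * m)) : Fin 4 → ℝ) μ := by
  have hr₀ : x 1 ≠ 0 := by simp [hr, hm]
  rw [christoffel_schwarzschildStar_zero_zero hr₀, inv_schwarzschildStar hr₀ hθ]
  fin_cases μ <;> simp [schwarzschildStarInv, hr, hm]
  field_simp
  ring

end Schwarzschild

/-- Section 3.1.2 of the paper: the curve `s ↦ ((1/κ) log s, 2m, θ₀, φ₀)` is an
affinely parametrized null geodesic of Schwarzschild (a generator of the event
horizon) and its energy with respect to `N^μ = -(g⁻¹)^{μ0}` equals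
`1/(κ s) = (1/κ) e^{-κ t*}`: the red-shift effect. -/
theorem horizon_generator_redshift (m : ℝ) (hm : 0 < m)
    (θ₀ : ℝ) (hθ₀ : θ₀ ∈ Set.Ioo 0 Real.pi) (φ₀ : ℝ) :
    ∀ s : ℝ, 0 < s →
      IsGeodesicAt (schwarzschildStar m)
        (fun t => ![(1 / (1 / (4 * m))) * Real.log t, 2 * m, θ₀, φ₀]) s ∧
      IsNullAt (schwarzschildStar m)
        (fun t => ![(1 / (1 / (4 * m))) * Real.log t, 2 * m, θ₀, φ₀]) s ∧
      (-(∑ μ : Fin 4, ∑ ν : Fin 4,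
          schwarzschildStar m (![(1 / (1 / (4 * m))) * Real.log s, 2 * m, θ₀, φ₀]) μ ν *
            (-(schwarzschildStar m (![(1 / (1 / (4 * m))) * Real.log s, 2 * m, θ₀, φ₀]))⁻¹ μ 0) *
            deriv (fun t => (![(1 / (1 / (4 * m))) * Real.log t, 2 * m, θ₀, φ₀] : Fin 4 → ℝ) ν) s)
        = 1 / ((1 / (4 * m)) * s)) ∧
      (1 / ((1 / (4 * m)) * s)
        = (1 / (1 / (4 * m))) * Real.exp (-(1 / (4 * m)) * ((1 / (1 / (4 * m))) * Real.log s))) := by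
  intro s hs
  have hm₀ : m ≠ 0 := hm.ne'
  have hκ : 1 / (4 * m) ≠ 0 := by positivity
  have hsin : sin θ₀ ≠ 0 := (sin_pos_of_pos_of_lt_pi hθ₀.1 hθ₀.2).ne'
  have hr : (![1 / (1 / (4 * m)) * log s, 2 * m, θ₀, φ₀] : Fin 4 → ℝ) 1 ≠ 0 := by simp [hm₀]
  have hv := deriv_log_curve_apply (1 / (1 / (4 * m))) (2 * m) θ₀ φ₀ s
  have hΓ := christoffel_schwarzschildStar_zero_zero_of_horizon
    (x := ![1 / (1 / (4 * m)) * log s, 2 * m, θ₀, φ₀]) hm₀ rfl hsin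
  refine ⟨isGeodesicAt_of_deriv_eq_pi_single hv (deriv_deriv_log_curve_apply _ _ _ _ s) hΓ ?_,
    isNullAt_of_deriv_eq_pi_single hv (schwarzschildStar_zero_zero_of_horizon hm₀ rfl), ?_,
    one_div_mul_eq_one_div_mul_exp hκ hs⟩
  · field_simp
    ring
  · simp only [mul_neg, neg_mul, Finset.sum_neg_distrib, neg_neg]
    rw [Matrix.sum_sum_mul_inv_apply_mul schwarzschildStar_isSymm
      (isUnit_det_schwarzschildStar hr hsin), hv, Pi.single_eq_same]
    field_simp
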